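/- arXiv:1902.01278 — 2 statements merged into one kernel-verified Lean document; each statement's English description precedes it below -/
import Mathlib

section
/- For positive integers n and r, writing (1 + z + z² + ... + z^r)^n = h_{n,0}(z^r) + z·h_{n,1}(z^r) + ... + z^{r-1}·h_{n,r-1}(z^r), the polynomial h_{n,0}(z) has only real roots. -/
/-!
Fix `w` with `0 < im w` and put `θ = arg w ∈ (0, π)`. For a real polynomial `p` consider the
sequence `d_p(k) = h(X ^ k * p)(w)`, `h` the `0`-th `r`-section. It satisfies
`d_p(k + r) = w * d_p(k)`, and `d_{P p}` is the sequence of window sums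
`d_p(k) + ⋯ + d_p(k + r)`, where `P = 1 + X + ⋯ + X ^ r`.

By induction on `n`, `d_{P ^ n}(k) = ρ_k e^{i α_k}` with `ρ_k ≥ 0` and `α` nondecreasing with
`α (k + r) = α k + θ`. Indeed the window at `k` lies in the sector `[α k, α k + θ]`, whose opening
is less than `π`, and contains a nonzero term, so it is nonzero with an argument in that sector.
The windows at `k` and `k + 1` share the terms `k + 1, …, k + r`, whose sum lies angularly between
the two windows, so the new arguments are again nondecreasing. Hence `h_{n,0}(w) = d_{P ^ n}(0)`
is nonzero, and roots off the real axis are excluded by conjugation.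
-/

open Polynomial

/-- The `j`-th `r`-section `f^{⟨r,j⟩}` of a polynomial `f`: the unique
polynomials with `f(z) = ∑_{j=0}^{r-1} z^j · f^{⟨r,j⟩}(z^r)`. -/
noncomputable def rSection (r j : ℕ) (p : Polynomial ℝ) : Polynomial ℝ :=
  ∑ m ∈ p.support, if m % r = j then C (p.coeff m) * X ^ (m / r) else 0

open Complex
open scoped Real

lemma coeff_rSection {r j : ℕ} (hj : j < r) (p : ℝ[X]) (i : ℕ) :
    (rSection r j p).coeff i = p.coeff (i * r + j) := by
  have hm : ∀ m, (m % r = j ∧ i = m / r) ↔ i * r + j = m := fun m ↦ by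
    constructor
    · rintro ⟨rfl, rfl⟩
      rw [mul_comm]; exact Nat.div_add_mod m r
    · rintro rfl
      rw [Nat.mul_add_mod_self_right, Nat.mod_eq_of_lt hj, add_comm,
        Nat.add_mul_div_right _ _ (by omega), Nat.div_eq_of_lt hj, zero_add]
      exact ⟨rfl, rfl⟩
  simp only [rSection, finsetSum_coeff, apply_ite (coeff · i), coeff_C_mul_X_pow, coeff_zero,
    ← ite_and, hm]
  rw [Finset.sum_ite_eq]
  split_ifs with h
  · rfl
  · exact (notMem_support_iff.1 h).symm

lemma rSection_sum {ι : Type*} {r j : ℕ} (hj : j < r) (s : Finset ι) (f : ι → ℝ[X]) :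
    rSection r j (∑ i ∈ s, f i) = ∑ i ∈ s, rSection r j (f i) := by
  ext i
  simp only [coeff_rSection hj, finsetSum_coeff]

lemma rSection_X_pow_mul {r j : ℕ} (hj : j < r) (p : ℝ[X]) :
    rSection r j (X ^ r * p) = X * rSection r j p := by
  ext i
  rw [coeff_rSection hj, coeff_X_pow_mul']
  rcases i with _ | i
  · simp [if_neg (show ¬ r ≤ j by omega)]
  · rw [if_pos (by nlinarith), coeff_X_mul, coeff_rSection hj]
    congr 1
    rw [add_mul, one_mul]; omega

lemma rSection_X_pow (r j m : ℕ) :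
    rSection r j (X ^ m) = if m % r = j then X ^ (m / r) else 0 := by
  simp [rSection, support_X_pow]

def closedSector (a b : ℝ) : Set ℂ :=
  {z | ∃ ρ : ℝ, 0 ≤ ρ ∧ ∃ φ ∈ Set.Icc a b, z = ρ * exp (φ * I)}

lemma le_of_mem_closedSector {a b : ℝ} {z : ℂ} (hz : z ∈ closedSector a b) : a ≤ b := by
  obtain ⟨-, -, φ, hφ, -⟩ := hz
  exact hφ.1.trans hφ.2

lemma mul_exp_mem_closedSector_iff {a b c : ℝ} {z : ℂ} :
    z * exp (c * I) ∈ closedSector (a + c) (b + c) ↔ z ∈ closedSector a b := by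
  constructor
  · rintro ⟨ρ, hρ, φ, hφ, hz⟩
    refine ⟨ρ, hρ, φ - c, ⟨by linarith [hφ.1], by linarith [hφ.2]⟩, ?_⟩
    apply mul_right_cancel₀ (exp_ne_zero (c * I))
    rw [hz, mul_assoc, ← exp_add]
    push_cast; ring_nf
  · rintro ⟨ρ, hρ, φ, hφ, rfl⟩
    refine ⟨ρ, hρ, φ + c, ⟨by linarith [hφ.1], by linarith [hφ.2]⟩, ?_⟩
    rw [mul_assoc, ← exp_add]; push_cast; ring_nf

lemma mem_closedSector_neg_self_iff {h : ℝ} (h0 : 0 ≤ h) (hπ : h ≤ π) {z : ℂ} :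
    z ∈ closedSector (-h) h ↔ ‖z‖ * Real.cos h ≤ z.re := by
  constructor
  · rintro ⟨ρ, hρ, φ, hφ, rfl⟩
    rw [norm_mul, norm_exp_ofReal_mul_I, mul_one, norm_real, Real.norm_of_nonneg hρ,
      re_ofReal_mul, exp_ofReal_mul_I_re, ← Real.cos_abs φ]
    exact mul_le_mul_of_nonneg_left
      (Real.cos_le_cos_of_nonneg_of_le_pi (abs_nonneg φ) hπ (abs_le.2 hφ)) hρ
  · intro hz
    rcases eq_or_ne z 0 with rfl | hz0
    · exact ⟨0, le_rfl, 0, ⟨by linarith, h0⟩, by simp⟩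
    refine ⟨‖z‖, norm_nonneg z, arg z, abs_le.1 ?_, (norm_mul_exp_arg_mul_I z).symm⟩
    rw [← norm_mul_cos_arg z, mul_le_mul_iff_right₀ (norm_pos_iff.2 hz0),
      ← Real.cos_abs (arg z)] at hz
    exact (Real.strictAntiOn_cos.le_iff_ge ⟨h0, hπ⟩ ⟨abs_nonneg _, abs_arg_le_pi z⟩).1 hz

lemma mem_closedSector_iff {a b : ℝ} (hab : a ≤ b) (hba : b - a ≤ 2 * π) {z : ℂ} :
    z ∈ closedSector a b ↔
      ‖z‖ * Real.cos ((b - a) / 2) ≤ (z * exp (↑(-((a + b) / 2)) * I)).re := by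
  rw [← mul_exp_mem_closedSector_iff (c := -((a + b) / 2)),
    show a + -((a + b) / 2) = -((b - a) / 2) by ring, show b + -((a + b) / 2) = (b - a) / 2 by ring,
    mem_closedSector_neg_self_iff (by linarith) (by linarith), norm_mul, norm_exp_ofReal_mul_I,
    mul_one]

lemma add_mem_closedSector {a b : ℝ} (hba : b - a ≤ π) {z₁ z₂ : ℂ}
    (h₁ : z₁ ∈ closedSector a b) (h₂ : z₂ ∈ closedSector a b) : z₁ + z₂ ∈ closedSector a b := by
  have hab := le_of_mem_closedSector h₁
  rw [mem_closedSector_iff hab (by linarith)] at *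
  have hcos : 0 ≤ Real.cos ((b - a) / 2) :=
    Real.cos_nonneg_of_neg_pi_div_two_le_of_le (by linarith) (by linarith)
  calc ‖z₁ + z₂‖ * Real.cos ((b - a) / 2)
      ≤ ‖z₁‖ * Real.cos ((b - a) / 2) + ‖z₂‖ * Real.cos ((b - a) / 2) := by
        rw [← add_mul]; exact mul_le_mul_of_nonneg_right (norm_add_le z₁ z₂) hcos
    _ ≤ _ := by rw [add_mul, add_re]; exact add_le_add h₁ h₂

lemma sum_mem_closedSector {ι : Type*} {s : Finset ι} {f : ι → ℂ} {a b : ℝ} (hab : a ≤ b)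
    (hba : b - a ≤ π) (hf : ∀ i ∈ s, f i ∈ closedSector a b) :
    ∑ i ∈ s, f i ∈ closedSector a b :=
  Finset.sum_induction f (· ∈ closedSector a b) (fun _ _ ↦ add_mem_closedSector hba)
    ⟨0, le_rfl, a, ⟨le_rfl, hab⟩, by simp⟩ hf

lemma sum_ne_zero_of_mem_closedSector {ι : Type*} {s : Finset ι} {f : ι → ℂ} {a b : ℝ}
    (hba : b - a < π) (hf : ∀ i ∈ s, f i ∈ closedSector a b) {i : ι} (hi : i ∈ s)
    (hfi : f i ≠ 0) : ∑ j ∈ s, f j ≠ 0 := by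
  have hab := le_of_mem_closedSector (hf i hi)
  have hcos : 0 < Real.cos ((b - a) / 2) :=
    Real.cos_pos_of_mem_Ioo ⟨by linarith, by linarith⟩
  have hre : 0 < ((∑ j ∈ s, f j) * exp (↑(-((a + b) / 2)) * I)).re := by
    rw [Finset.sum_mul, re_sum]
    refine Finset.sum_pos' (fun j hj ↦ ?_) ⟨i, hi, ?_⟩
    · exact le_trans (by positivity) ((mem_closedSector_iff hab (by linarith)).1 (hf j hj))
    · exact lt_of_lt_of_le (by positivity) ((mem_closedSector_iff hab (by linarith)).1 (hf i hi))
  intro h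
  simp [h] at hre

lemma mem_Icc_of_mem_closedSector {a b ρ φ : ℝ} {z : ℂ} (hz0 : z ≠ 0) (hρ : 0 ≤ ρ)
    (hz : z = ρ * exp (φ * I)) (hmem : z ∈ closedSector a b) (ha : φ - 2 * π < a)
    (hb : b < φ + 2 * π) : φ ∈ Set.Icc a b := by
  obtain ⟨ρ', hρ', ψ, hψ, rfl⟩ := hmem
  have hnorm : ρ' = ρ := by
    simpa [norm_exp_ofReal_mul_I, abs_of_nonneg hρ, abs_of_nonneg hρ'] using congrArg norm hz
  subst hnorm
  have hexp : exp (ψ * I) = exp (φ * I) :=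
    mul_left_cancel₀ (by rintro h; simp [h] at hz0) hz
  have : Circle.exp ψ = Circle.exp φ := Subtype.ext hexp
  have := Circle.exp_injOn_of_forall_sub_mem_Ioo (s := {ψ, φ}) (by
    simp only [Set.mem_insert_iff, Set.mem_singleton_iff]
    rintro x (rfl | rfl) y (rfl | rfl) <;> constructor <;> linarith [hψ.1, hψ.2, Real.pi_pos])
    (by simp) (by simp) this
  exact this ▸ hψ

lemma arg_mem_Ioo_of_im_pos {w : ℂ} (hw : 0 < w.im) : arg w ∈ Set.Ioo 0 π :=
  ⟨(arg_nonneg_iff.2 hw.le).lt_of_ne fun h ↦ hw.ne' (arg_eq_zero_iff.1 h.symm).2,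
    arg_lt_pi_iff.2 (Or.inr hw.ne')⟩

def windowSum (r : ℕ) (d : ℕ → ℂ) (k : ℕ) : ℂ :=
  ∑ e ∈ Finset.range (r + 1), d (k + e)

lemma windowSum_add_period {r : ℕ} {w : ℂ} {d : ℕ → ℂ} (hdw : ∀ k, d (k + r) = w * d k)
    (k : ℕ) : windowSum r d (k + r) = w * windowSum r d k := by
  simp only [windowSum, Finset.mul_sum, ← hdw, add_right_comm]

-- `ρ = 0` is allowed so that `sectionSeq r w 1`, which vanishes off multiples of `r`, has a lift.
structure IsMonotoneArgLift (r : ℕ) (θ : ℝ) (d : ℕ → ℂ) (α : ℕ → ℝ) : Prop where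
  monotone : Monotone α
  map_add_period : ∀ k, α (k + r) = α k + θ
  polar : ∀ k, ∃ ρ : ℝ, 0 ≤ ρ ∧ d k = ρ * exp (α k * I)

namespace IsMonotoneArgLift

variable {r : ℕ} {θ : ℝ} {d : ℕ → ℂ} {α : ℕ → ℝ}

lemma mem_closedSector (h : IsMonotoneArgLift r θ d α) {a b : ℝ} {k : ℕ} (ha : a ≤ α k)
    (hb : α k ≤ b) : d k ∈ closedSector a b := by
  obtain ⟨ρ, hρ, hdk⟩ := h.polar k
  exact ⟨ρ, hρ, α k, ⟨ha, hb⟩, hdk⟩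

lemma sum_range_mem_closedSector (h : IsMonotoneArgLift r θ d α) (k m : ℕ)
    (hπ : α (k + m) - α k ≤ π) :
    ∑ e ∈ Finset.range (m + 1), d (k + e) ∈ closedSector (α k) (α (k + m)) :=
  sum_mem_closedSector (h.monotone (by omega)) hπ fun e he ↦
    h.mem_closedSector (h.monotone (by omega)) (h.monotone (by simp at he; omega))

lemma windowSum_mem_closedSector (h : IsMonotoneArgLift r θ d α) (hθ : θ ≤ π) (k : ℕ) :
    windowSum r d k ∈ closedSector (α k) (α k + θ) :=
  h.map_add_period k ▸ h.sum_range_mem_closedSector k r (by rw [h.map_add_period]; linarith)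

lemma windowSum_ne_zero (h : IsMonotoneArgLift r θ d α) (hθ : θ < π) {k : ℕ}
    (hne : ∃ e ≤ r, d (k + e) ≠ 0) : windowSum r d k ≠ 0 := by
  obtain ⟨e, he, hde⟩ := hne
  refine sum_ne_zero_of_mem_closedSector (a := α k) (b := α k + θ) (by linarith)
    (fun e he ↦ h.mem_closedSector (h.monotone (by omega)) ?_) (Finset.mem_range.2 (by omega)) hde
  rw [← h.map_add_period]
  exact h.monotone (by simp at he; omega)

lemma le_of_windowSum_eq (h : IsMonotoneArgLift r θ d α) (hr : 0 < r) (hθ : θ < π) {k : ℕ}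
    {ρ₁ ρ₂ φ₁ φ₂ : ℝ} (hρ₁ : 0 ≤ ρ₁) (hρ₂ : 0 ≤ ρ₂)
    (h₁ : windowSum r d k = ρ₁ * exp (φ₁ * I)) (h₂ : windowSum r d (k + 1) = ρ₂ * exp (φ₂ * I))
    (hφ₁ : φ₁ ∈ Set.Icc (α k) (α k + θ)) (hφ₂ : φ₂ ∈ Set.Icc (α (k + 1)) (α (k + 1) + θ))
    (hne₁ : windowSum r d k ≠ 0) (hne₂ : windowSum r d (k + 1) ≠ 0) : φ₁ ≤ φ₂ := by
  obtain ⟨m, rfl⟩ : ∃ m, r = m + 1 := ⟨r - 1, by omega⟩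
  have hαm : α (k + 1 + m) = α k + θ := by rw [← h.map_add_period k]; ring_nf
  have hαk : α k ≤ α (k + 1) := h.monotone k.le_succ
  have hπ := Real.pi_pos
  -- the sum `ρ e^{iσ}` of the terms common to both windows lies angularly between them
  obtain ⟨ρ, hρ, σ, hσ, hS⟩ :=
    h.sum_range_mem_closedSector (k + 1) m (by rw [hαm]; linarith)
  rw [hαm] at hσ
  have hS_mem : ∀ a b, a ≤ σ → σ ≤ b →
      ∑ e ∈ Finset.range (m + 1), d (k + 1 + e) ∈ closedSector a b := fun a b ha hb ↦
    ⟨ρ, hρ, σ, ⟨ha, hb⟩, hS⟩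
  have hleft : windowSum (m + 1) d k ∈ closedSector (α k) σ := by
    have : windowSum (m + 1) d k = d k + ∑ e ∈ Finset.range (m + 1), d (k + 1 + e) := by
      rw [windowSum, Finset.sum_range_succ', add_zero, add_comm]
      simp only [add_assoc, add_comm 1]
    rw [this]
    exact add_mem_closedSector (by linarith [hσ.2])
      (h.mem_closedSector le_rfl (by linarith [hσ.1])) (hS_mem _ _ (by linarith [hσ.1]) le_rfl)
  have hright : windowSum (m + 1) d (k + 1) ∈ closedSector σ (α (k + 1) + θ) := by
    rw [windowSum, Finset.sum_range_succ]
    exact add_mem_closedSector (by linarith [hσ.1]) (hS_mem _ _ le_rfl (by linarith [hσ.2]))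
      (h.mem_closedSector (by linarith [hσ.2, h.map_add_period (k + 1)])
        (h.map_add_period (k + 1)).le)
  calc φ₁ ≤ σ := (mem_Icc_of_mem_closedSector hne₁ hρ₁ h₁ hleft
        (by linarith [hφ₁.2]) (by linarith [hφ₁.1, hσ.2])).2
    _ ≤ φ₂ := (mem_Icc_of_mem_closedSector hne₂ hρ₂ h₂ hright
        (by linarith [hφ₂.2, hσ.1]) (by linarith [hφ₂.1])).1

theorem exists_isMonotoneArgLift_windowSum {w : ℂ} (h : IsMonotoneArgLift r (arg w) d α)
    (hr : 0 < r) (hw : 0 < w.im) (hdw : ∀ k, d (k + r) = w * d k)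
    (hne : ∀ k, ∃ e ≤ r, d (k + e) ≠ 0) :
    (∃ α', IsMonotoneArgLift r (arg w) (windowSum r d) α') ∧ ∀ k, windowSum r d k ≠ 0 := by
  obtain ⟨-, hθπ⟩ := arg_mem_Ioo_of_im_pos hw
  have hD_ne k := h.windowSum_ne_zero hθπ (hne k)
  choose ρ' hρ' α' hα' hD' using h.windowSum_mem_closedSector hθπ.le
  refine ⟨⟨α', ⟨monotone_nat_of_le_succ fun k ↦ h.le_of_windowSum_eq hr hθπ (hρ' k)
    (hρ' (k + 1)) (hD' k) (hD' (k + 1)) (hα' k) (hα' (k + 1)) (hD_ne k) (hD_ne (k + 1)),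
    fun k ↦ ?_, fun k ↦ ⟨ρ' k, hρ' k, hD' k⟩⟩⟩, hD_ne⟩
  have hDw : windowSum r d (k + r) = (‖w‖ * ρ' k : ℝ) * exp ((α' k + arg w : ℝ) * I) := by
    rw [windowSum_add_period hdw, hD' k]
    conv_lhs => rw [← norm_mul_exp_arg_mul_I w]
    push_cast
    rw [add_mul, exp_add]
    ring
  have := mem_Icc_of_mem_closedSector (hD_ne _) (by positivity [hρ' k]) hDw
    ⟨ρ' _, hρ' _, α' _, ⟨le_rfl, le_rfl⟩, hD' _⟩
    (by linarith [(hα' k).2, (hα' (k + r)).1, h.map_add_period k, Real.pi_pos])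
    (by linarith [(hα' k).1, (hα' (k + r)).2, h.map_add_period k, Real.pi_pos])
  exact le_antisymm this.1 this.2

end IsMonotoneArgLift

-- Multiplying `p` by `X` shifts this sequence, so multiplying by `1 + X + ⋯ + X ^ r` turns it
-- into its window sums.
noncomputable def sectionSeq (r : ℕ) (w : ℂ) (p : ℝ[X]) (k : ℕ) : ℂ :=
  aeval w (rSection r 0 (X ^ k * p))

section sectionSeq

variable {r : ℕ} {w : ℂ}

lemma sectionSeq_add_period (hr : 0 < r) (p : ℝ[X]) (k : ℕ) :
    sectionSeq r w p (k + r) = w * sectionSeq r w p k := by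
  rw [sectionSeq, pow_add, mul_comm (X ^ k), mul_assoc, rSection_X_pow_mul hr, map_mul, aeval_X,
    sectionSeq]

lemma sectionSeq_geom_mul (hr : 0 < r) (p : ℝ[X]) :
    sectionSeq r w ((∑ j ∈ Finset.range (r + 1), X ^ j) * p) = windowSum r (sectionSeq r w p) := by
  ext k
  simp only [sectionSeq, windowSum, Finset.sum_mul, Finset.mul_sum, ← mul_assoc, ← pow_add,
    rSection_sum hr, map_sum]

lemma sectionSeq_one (k : ℕ) :
    sectionSeq r w 1 k = if k % r = 0 then w ^ (k / r) else 0 := by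
  rw [sectionSeq, mul_one, rSection_X_pow]
  split_ifs <;> simp

lemma isMonotoneArgLift_sectionSeq_one (hr : 0 < r) (hw : 0 ≤ w.im) :
    IsMonotoneArgLift r (arg w) (sectionSeq r w 1) (fun k ↦ arg w * k / r) where
  monotone a b hab := by
    have := arg_nonneg_iff.2 hw
    dsimp only
    gcongr
  map_add_period k := by
    push_cast
    field_simp
  polar k := by
    rw [sectionSeq_one]
    split_ifs with hk
    · obtain ⟨q, rfl⟩ := Nat.dvd_of_mod_eq_zero hk
      refine ⟨‖w‖ ^ q, by positivity, ?_⟩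
      rw [Nat.mul_div_cancel_left q hr]
      conv_lhs => rw [← norm_mul_exp_arg_mul_I w]
      rw [mul_pow, ← exp_nat_mul]
      have : (r : ℂ) ≠ 0 := by exact_mod_cast hr.ne'
      push_cast
      field_simp
    · exact ⟨0, le_rfl, by simp⟩

lemma exists_sectionSeq_one_ne_zero (hr : 0 < r) (hw : w ≠ 0) (k : ℕ) :
    ∃ e ≤ r, sectionSeq r w 1 (k + e) ≠ 0 := by
  refine ⟨r - k % r, by omega, ?_⟩
  have hk : k + (r - k % r) = r * (k / r + 1) := by
    have := Nat.div_add_mod k r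
    have := Nat.mod_lt k hr
    rw [mul_add_one]; omega
  rw [sectionSeq_one, hk, Nat.mul_mod_right, if_pos rfl]
  exact pow_ne_zero _ hw

theorem exists_isMonotoneArgLift_sectionSeq_geom_pow (hr : 0 < r) (hw : 0 < w.im) (n : ℕ) :
    (∃ α, IsMonotoneArgLift r (arg w) (sectionSeq r w ((∑ j ∈ Finset.range (r + 1), X ^ j) ^ n)) α)
      ∧ ∀ k, ∃ e ≤ r, sectionSeq r w ((∑ j ∈ Finset.range (r + 1), X ^ j) ^ n) (k + e) ≠ 0 := by
  induction n with
  | zero =>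
    rw [pow_zero]
    exact ⟨⟨_, isMonotoneArgLift_sectionSeq_one hr hw.le⟩,
      exists_sectionSeq_one_ne_zero hr (fun h ↦ by simp [h] at hw)⟩
  | succ n ih =>
    obtain ⟨⟨α, hα⟩, hne⟩ := ih
    rw [pow_succ', sectionSeq_geom_mul hr]
    obtain ⟨hlift, hne'⟩ :=
      hα.exists_isMonotoneArgLift_windowSum hr hw (sectionSeq_add_period hr _) hne
    exact ⟨hlift, fun k ↦ ⟨0, r.zero_le, hne' (k + 0)⟩⟩

end sectionSeq

theorem aeval_rSection_geom_pow_ne_zero {r n : ℕ} {w : ℂ} (hr : 0 < r) (hn : 0 < n)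
    (hw : 0 < w.im) : aeval w (rSection r 0 ((∑ j ∈ Finset.range (r + 1), X ^ j) ^ n)) ≠ 0 := by
  obtain ⟨m, rfl⟩ := Nat.exists_eq_add_one_of_ne_zero hn.ne'
  obtain ⟨⟨α, hα⟩, hne⟩ := exists_isMonotoneArgLift_sectionSeq_geom_pow hr hw m
  have := (hα.exists_isMonotoneArgLift_windowSum hr hw (sectionSeq_add_period hr _) hne).2 0
  rwa [← sectionSeq_geom_mul hr, ← pow_succ', sectionSeq, pow_zero, one_mul] at this

theorem im_eq_zero_of_aeval_eq_zero {p : ℝ[X]} (hp : ∀ w : ℂ, 0 < w.im → aeval w p ≠ 0)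
    {z : ℂ} (hz : aeval z p = 0) : z.im = 0 := by
  rcases lt_trichotomy z.im 0 with h | h | h
  · refine absurd ?_ (hp (starRingEnd ℂ z) (by simpa using h))
    rw [aeval_conj, hz, map_zero]
  · exact h
  · exact absurd hz (hp z h)

/-- writing `(1 + z + ⋯ + z^r)^n = ∑_{j<r} z^j h_{n,j}(z^r)`,
the polynomial `h_{n,0}` has only real roots. -/
theorem stmt15 (n r : ℕ) (hn : 0 < n) (hr : 0 < r) :
    ∀ z : ℂ, aeval z (rSection r 0 ((∑ j ∈ Finset.range (r + 1), X ^ j) ^ n)) = 0 →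
      z.im = 0 := fun _ ↦
  im_eq_zero_of_aeval_eq_zero fun _ hw ↦ aeval_rSection_geom_pow_ne_zero hr hn hw
end

section
/- The map f : I_n^s → I_n^s defined by f(e)_i = (-e_i) mod s_i is an involution satisfying asc(e) = des(f(e)), des(e) = asc(f(e)), and col(e) = col(f(e)) for every e ∈ I_n^s. -/
open Polynomial

/-- The entries `s_0, s_1, …, s_n, s_{n+1}` of the sequence `s`, with the
conventions `s_0 = s_{n+1} = 1` (here `s i` for `i : Fin n` is `s_{i+1}`). -/
def sExt {n : ℕ} (s : Fin n → ℕ+) (i : ℕ) : ℕ :=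
  if h : 1 ≤ i ∧ i ≤ n then (s ⟨i - 1, by omega⟩ : ℕ) else 1

/-- The entries `e_0, e_1, …, e_n, e_{n+1}` of an `s`-inversion sequence `e`
(an element of `I_n^s`, encoded as a dependent function with `0 ≤ e_i < s_i`),
with the conventions `e_0 = e_{n+1} = 0`. -/
def eExt {n : ℕ} {s : Fin n → ℕ+} (e : ∀ i : Fin n, Fin (s i)) (i : ℕ) : ℕ :=
  if h : 1 ≤ i ∧ i ≤ n then (e ⟨i - 1, by omega⟩ : ℕ) else 0

/-- The ratio `e_i / s_i` as a rational number. -/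
def invRatio {n : ℕ} {s : Fin n → ℕ+} (e : ∀ i : Fin n, Fin (s i)) (i : ℕ) : ℚ :=
  (eExt e i : ℚ) / (sExt s i : ℚ)

/-- The number of ascents of `e ∈ I_n^s`: indices `i ∈ {0, …, n}` with
`e_i/s_i < e_{i+1}/s_{i+1}`. -/
def ascStat {n : ℕ} {s : Fin n → ℕ+} (e : ∀ i : Fin n, Fin (s i)) : ℕ :=
  ((Finset.range (n + 1)).filter fun i => invRatio e i < invRatio e (i + 1)).card

/-- The number of collisions of `e ∈ I_n^s`: indices `i ∈ {0, …, n}` with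
`e_i/s_i = e_{i+1}/s_{i+1}`. -/
def colStat {n : ℕ} {s : Fin n → ℕ+} (e : ∀ i : Fin n, Fin (s i)) : ℕ :=
  ((Finset.range (n + 1)).filter fun i => invRatio e i = invRatio e (i + 1)).card

/-- The number of descents of `e ∈ I_n^s`: indices `i ∈ {0, …, n}` with
`e_i/s_i > e_{i+1}/s_{i+1}`. -/
def desStat {n : ℕ} {s : Fin n → ℕ+} (e : ∀ i : Fin n, Fin (s i)) : ℕ :=
  ((Finset.range (n + 1)).filter fun i => invRatio e (i + 1) < invRatio e i).card

/-- The map `f : I_n^s → I_n^s` given by `f(e)_i = (-e_i) mod s_i`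
(computed in `ℕ` as `(s_i - e_i) mod s_i`). -/
def negMod {n : ℕ} {s : Fin n → ℕ+} (e : ∀ i : Fin n, Fin (s i)) :
    ∀ i : Fin n, Fin (s i) :=
  fun i => ⟨((s i : ℕ) - (e i : ℕ)) % (s i : ℕ), Nat.mod_lt _ (s i).pos⟩

lemma my_sExt_pos {n : ℕ} (s : Fin n → ℕ+) (i : ℕ) : 0 < sExt s i := by
  unfold sExt; split
  · exact (s _).pos
  · exact one_pos

lemma my_eExt_lt {n : ℕ} {s : Fin n → ℕ+} (e : ∀ i : Fin n, Fin (s i)) (i : ℕ) :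
    eExt e i < sExt s i := by
  unfold eExt sExt; split
  · exact (e _).isLt
  · exact one_pos

lemma my_invRatio_nonneg {n : ℕ} {s : Fin n → ℕ+} (e : ∀ i : Fin n, Fin (s i)) (i : ℕ) :
    0 ≤ invRatio e i := by
  unfold invRatio; positivity

lemma my_invRatio_lt_one {n : ℕ} {s : Fin n → ℕ+} (e : ∀ i : Fin n, Fin (s i)) (i : ℕ) :
    invRatio e i < 1 := by
  unfold invRatio
  rw [div_lt_one (by exact_mod_cast my_sExt_pos s i)]
  exact_mod_cast my_eExt_lt e i

lemma my_invRatio_eq_zero {n : ℕ} {s : Fin n → ℕ+} (e : ∀ i : Fin n, Fin (s i)) (i : ℕ) :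
    invRatio e i = 0 ↔ eExt e i = 0 := by
  unfold invRatio
  rw [_root_.div_eq_zero_iff]
  have : (sExt s i : ℚ) ≠ 0 := by exact_mod_cast (my_sExt_pos s i).ne'
  simp [this]

lemma my_eExt_negMod {n : ℕ} {s : Fin n → ℕ+} (e : ∀ i : Fin n, Fin (s i)) (i : ℕ) :
    eExt (negMod e) i = (sExt s i - eExt e i) % sExt s i := by
  unfold eExt sExt negMod; split <;> simp

lemma my_invRatio_negMod {n : ℕ} {s : Fin n → ℕ+} (e : ∀ i : Fin n, Fin (s i)) (i : ℕ) :
    invRatio (negMod e) i = if invRatio e i = 0 then 0 else 1 - invRatio e i := by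
  have hs := my_sExt_pos s i
  have he := my_eExt_lt e i
  simp only [my_invRatio_eq_zero]
  unfold invRatio
  rw [my_eExt_negMod]
  rcases Nat.eq_zero_or_pos (eExt e i) with h | h
  · simp [h, Nat.mod_self]
  · rw [if_neg (by omega), Nat.mod_eq_of_lt (by omega), Nat.cast_sub he.le, sub_div,
      div_self (by exact_mod_cast hs.ne')]

lemma my_endpoint0 {n : ℕ} {s : Fin n → ℕ+} (e : ∀ i : Fin n, Fin (s i)) :
    invRatio e 0 = 0 := by
  simp [invRatio, eExt]

lemma my_endpointn {n : ℕ} {s : Fin n → ℕ+} (e : ∀ i : Fin n, Fin (s i)) :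
    invRatio e (n + 1) = 0 := by
  simp [invRatio, eExt]

lemma my_key {n : ℕ} {s : Fin n → ℕ+} (e : ∀ i : Fin n, Fin (s i)) :
    ((Finset.range (n + 1)).filter fun i =>
        invRatio e i = 0 ∧ invRatio e (i + 1) ≠ 0).card =
    ((Finset.range (n + 1)).filter fun i =>
        invRatio e i ≠ 0 ∧ invRatio e (i + 1) = 0).card := by
  set r := invRatio e with hr
  set b : ℕ → ℤ := fun i => if r i = 0 then 0 else 1 with hb
  have tele : ∑ i ∈ Finset.range (n + 1), (b (i + 1) - b i) = b (n + 1) - b 0 :=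
    Finset.sum_range_sub b (n + 1)
  have hterm : ∀ i, b (i + 1) - b i =
      (if r i = 0 ∧ r (i + 1) ≠ 0 then (1 : ℤ) else 0) -
      (if r i ≠ 0 ∧ r (i + 1) = 0 then (1 : ℤ) else 0) := by
    intro i
    by_cases h1 : r i = 0 <;> by_cases h2 : r (i + 1) = 0 <;> simp [hb, h1, h2]
  have hend : b (n + 1) - b 0 = 0 := by
    simp [hb, hr, my_endpoint0 e, my_endpointn e]
  rw [hend] at tele
  simp only [hterm, Finset.sum_sub_distrib] at tele
  rw [Finset.sum_boole, Finset.sum_boole, sub_eq_zero] at tele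
  exact_mod_cast tele

lemma my_asc_des {n : ℕ} {s : Fin n → ℕ+} (e : ∀ i : Fin n, Fin (s i)) :
    ((Finset.range (n + 1)).filter fun i => invRatio e i < invRatio e (i + 1)).card =
    ((Finset.range (n + 1)).filter fun i =>
        invRatio (negMod e) (i + 1) < invRatio (negMod e) i).card := by
  set r := invRatio e with hr
  have hr' : ∀ i, invRatio (negMod e) i = if r i = 0 then 0 else 1 - r i :=
    fun i => my_invRatio_negMod e i
  have h0 : ∀ i, 0 ≤ r i := fun i => my_invRatio_nonneg e i
  have h1 : ∀ i, r i < 1 := fun i => my_invRatio_lt_one e i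
  have hA : ∀ i, (r i < r (i + 1)) ↔
      ((r i ≠ 0 ∧ r (i + 1) ≠ 0 ∧ r i < r (i + 1)) ∨ (r i = 0 ∧ r (i + 1) ≠ 0)) := by
    intro i
    constructor
    · intro h
      by_cases c1 : r i = 0
      · exact Or.inr ⟨c1, ((c1 ▸ h).trans_le' le_rfl).ne'⟩
      · exact Or.inl ⟨c1, (lt_of_le_of_lt (h0 i) h).ne', h⟩
    · rintro (⟨_, _, h⟩ | ⟨c1, c2⟩)
      · exact h
      · rw [c1]; exact (h0 _).lt_of_ne (Ne.symm c2)
  have hD : ∀ i, (invRatio (negMod e) (i + 1) < invRatio (negMod e) i) ↔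
      ((r i ≠ 0 ∧ r (i + 1) ≠ 0 ∧ r i < r (i + 1)) ∨ (r i ≠ 0 ∧ r (i + 1) = 0)) := by
    intro i
    rw [hr' i, hr' (i + 1)]
    by_cases c1 : r i = 0 <;> by_cases c2 : r (i + 1) = 0
    · rw [if_pos c1, if_pos c2]
      constructor
      · intro h; exact absurd rfl h.ne
      · rintro (⟨c, _⟩ | ⟨c, _⟩) <;> exact absurd c1 c
    · rw [if_pos c1, if_neg c2]
      have := h1 (i + 1)
      constructor
      · intro h; linarith
      · rintro (⟨c, _⟩ | ⟨c, _⟩) <;> exact absurd c1 c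
    · rw [if_neg c1, if_pos c2]
      have := h1 i
      constructor
      · intro _; exact Or.inr ⟨c1, c2⟩
      · intro _; linarith
    · rw [if_neg c1, if_neg c2]
      constructor
      · intro h; exact Or.inl ⟨c1, c2, by linarith⟩
      · rintro (⟨_, _, h⟩ | ⟨_, c⟩)
        · linarith
        · exact absurd c c2
  rw [Finset.filter_congr (fun i _ => hA i), Finset.filter_congr (fun i _ => hD i),
    Finset.filter_or, Finset.filter_or,
    Finset.card_union_of_disjoint, Finset.card_union_of_disjoint]
  · rw [my_key e]
  · rw [Finset.disjoint_left]; intro a ha hb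
    simp only [Finset.mem_filter] at ha hb
    tauto
  · rw [Finset.disjoint_left]; intro a ha hb
    simp only [Finset.mem_filter] at ha hb
    tauto

lemma my_col {n : ℕ} {s : Fin n → ℕ+} (e : ∀ i : Fin n, Fin (s i)) (i : ℕ) :
    (invRatio (negMod e) i = invRatio (negMod e) (i + 1)) ↔
      (invRatio e i = invRatio e (i + 1)) := by
  rw [my_invRatio_negMod e i, my_invRatio_negMod e (i + 1)]
  have h1 := my_invRatio_lt_one e i
  have h1' := my_invRatio_lt_one e (i + 1)
  by_cases c1 : invRatio e i = 0 <;> by_cases c2 : invRatio e (i + 1) = 0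
  · simp [c1, c2]
  · rw [if_pos c1, if_neg c2]
    constructor
    · intro h; exact absurd (by linarith : invRatio e (i + 1) = 1) (by linarith)
    · intro h; exact absurd (c1 ▸ h.symm) c2
  · rw [if_neg c1, if_pos c2]
    constructor
    · intro h; exact absurd (by linarith : invRatio e i = 1) (by linarith)
    · intro h; exact absurd (c2 ▸ h) c1
  · rw [if_neg c1, if_neg c2]
    constructor <;> intro h <;> linarith

lemma my_negMod_invol {n : ℕ} {s : Fin n → ℕ+} (e : ∀ i : Fin n, Fin (s i)) :
    negMod (negMod e) = e := by
  funext i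
  apply Fin.ext
  show ((s i : ℕ) - ((s i : ℕ) - (e i : ℕ)) % (s i : ℕ)) % (s i : ℕ) = (e i : ℕ)
  have hlt := (e i).isLt
  rcases Nat.eq_zero_or_pos (e i : ℕ) with h0 | h0
  · rw [h0]; simp [Nat.mod_self]
  · have ha : ((s i : ℕ) - (e i : ℕ)) % (s i : ℕ) = (s i : ℕ) - (e i : ℕ) :=
      Nat.mod_eq_of_lt (by omega)
    rw [ha]
    have hb : (s i : ℕ) - ((s i : ℕ) - (e i : ℕ)) = (e i : ℕ) := by omega
    rw [hb]
    exact Nat.mod_eq_of_lt hlt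

lemma my_ascStat_eq {n : ℕ} {s : Fin n → ℕ+} (e : ∀ i : Fin n, Fin (s i)) :
    ascStat e = desStat (negMod e) :=
  my_asc_des e

theorem stmt19 (n : ℕ) (s : Fin n → ℕ+) (e : ∀ i : Fin n, Fin (s i)) :
    negMod (negMod e) = e ∧
    ascStat e = desStat (negMod e) ∧
    desStat e = ascStat (negMod e) ∧
    colStat e = colStat (negMod e) := by
  refine ⟨my_negMod_invol e, my_ascStat_eq e, ?_, ?_⟩
  · have h := my_ascStat_eq (negMod e)
    rw [my_negMod_invol e] at h
    exact h.symm
  · unfold colStat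
    rw [Finset.filter_congr (fun i _ => (my_col e i).symm)]
end
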